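/- arXiv:math/0606751 — 2 statements merged into one kernel-verified Lean document; each statement's English description precedes it below -/
import Mathlib

section
/- Fix δ > 0 and consider the once-reinforced random walk with reinforcement parameter δ on the nonnegative integers started at 0. Then for every n ≥ 1, the probability that, after the first jump (which is necessarily to 1), the walk reaches n+1 before returning to 0 equals ∏_{j=1}^n j/(j + δ). -/
/-!
The pair (position, running maximum) is a Markov chain: splitting an event of the path up to
time `K` into cylinders, the transition law gives `P (A ∩ {X (K + 1) = b}) = P A * orwStep …`
whenever the state at time `K` is constant on `A`. Hence the probability of reaching `n + 1`
within `L` steps after the forced first jump, without returning to `0`, obeys the recursion of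
the walk killed on leaving `[1, n]`.

The function `h (j, m) = (j / m) ∏_{i=m}^{n} i / (i + δ)` is harmonic for this chain on the live
states `1 ≤ j ≤ m ≤ n`, with boundary values `0` at position `0` and `1` at `(n + 1, n + 1)`. So
`h` minus the probability of success within `L` steps is the killed operator applied `L` times
to `h`, which is at most the probability of surviving `L` steps. Survival decays geometrically,
since from any live state `n` consecutive up-steps, each of probability at least
`min (1/2) (1/(1+δ))`, leave the interval. So the success probabilities increase to
`h (1, 1) = ∏_{j=1}^{n} j / (j + δ)`.
-/

open MeasureTheory Finset

/-- One-step transition probability of the once-reinforced random walk on the nonnegative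
integers, with reinforcement parameter `δ`, as a function of the current position `j`, the
running maximum `m` of the walk so far, and the proposed next position `next`:
from `0` the walk steps to `1`; strictly below the running maximum it is a fair simple
random walk; at the running maximum `j ≥ 1` it steps to `j+1` with probability `1/(1+δ)`
and to `j-1` with probability `δ/(1+δ)`. -/
noncomputable def orwStep (δ : ℝ) (j m next : ℕ) : ℝ :=
  if j = 0 then (if next = 1 then 1 else 0)
  else if j < m then
    (if next = j + 1 then 1 / 2 else if next = j - 1 then 1 / 2 else 0)
  else
    (if next = j + 1 then 1 / (1 + δ) else if next = j - 1 then δ / (1 + δ) else 0)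


section Step

variable {δ : ℝ} {j m : ℕ}

theorem orwStep_nonneg (hδ : 0 ≤ δ) (j m b : ℕ) : 0 ≤ orwStep δ j m b := by
  unfold orwStep
  split_ifs <;> positivity

theorem orwStep_eq_zero (hj : j ≠ 0) {b : ℕ} (hb₁ : b ≠ j + 1) (hb₂ : b ≠ j - 1) :
    orwStep δ j m b = 0 := by
  simp [orwStep, hj, hb₁, hb₂]

theorem orwStep_succ_add_orwStep_pred (hδ : 0 ≤ δ) (hj : j ≠ 0) :
    orwStep δ j m (j + 1) + orwStep δ j m (j - 1) = 1 := by
  have hne : j - 1 ≠ j + 1 := by omega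
  simp only [orwStep, hj, hne, if_true, if_false]
  split_ifs
  · norm_num
  · field_simp

theorem sum_orwStep_mul (hj : j ≠ 0) {s : Finset ℕ} (hs₁ : j + 1 ∈ s) (hs₂ : j - 1 ∈ s)
    (F : ℕ → ℝ) :
    ∑ b ∈ s, orwStep δ j m b * F b
      = orwStep δ j m (j + 1) * F (j + 1) + orwStep δ j m (j - 1) * F (j - 1) :=
  sum_eq_add_of_mem _ _ hs₁ hs₂ (by omega) fun b _ hb => by
    rw [orwStep_eq_zero hj hb.1 hb.2, zero_mul]

theorem sum_orwStep_le_one (hδ : 0 ≤ δ) (hj : j ≠ 0) (s : Finset ℕ) :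
    ∑ b ∈ s, orwStep δ j m b ≤ 1 :=
  calc ∑ b ∈ s, orwStep δ j m b ≤ ∑ b ∈ s ∪ {j + 1, j - 1}, orwStep δ j m b :=
        sum_le_sum_of_subset_of_nonneg subset_union_left fun b _ _ => orwStep_nonneg hδ j m b
    _ = 1 := by
        rw [← orwStep_succ_add_orwStep_pred hδ hj (m := m)]
        simpa using sum_orwStep_mul (m := m) (δ := δ) hj (by simp) (by simp) fun _ => 1

end Step

namespace ORW

noncomputable def minUpProb (δ : ℝ) : ℝ := min (1 / 2) (1 / (1 + δ))

variable {δ : ℝ} {n : ℕ}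

theorem minUpProb_pos (hδ : 0 ≤ δ) : 0 < minUpProb δ := by
  unfold minUpProb
  positivity

theorem minUpProb_le_one : minUpProb δ ≤ 1 :=
  (min_le_left _ _).trans (by norm_num)

theorem minUpProb_le_orwStep_succ {j m : ℕ} (hj : j ≠ 0) :
    minUpProb δ ≤ orwStep δ j m (j + 1) := by
  simp only [minUpProb, orwStep, hj, if_true, if_false]
  split_ifs
  exacts [min_le_left _ _, min_le_right _ _]

def liveStates (n : ℕ) : Set (ℕ × ℕ) := {s | 1 ≤ s.1 ∧ s.1 ≤ s.2 ∧ s.2 ≤ n}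

theorem mk_max_mem_liveStates {m b : ℕ} (hm : m ≤ n) (hb : b ∈ Icc 1 n) :
    (b, max m b) ∈ liveStates n := by
  simp only [mem_Icc] at hb
  exact ⟨hb.1, le_max_right m b, max_le hm hb.2⟩

/-- The one-step operator, on functions of the state (position, running maximum), of the walk
killed when it leaves `[1, n]`. -/
noncomputable def killedStep (δ : ℝ) (n : ℕ) : Module.End ℝ (ℕ × ℕ → ℝ) where
  toFun f s := ∑ b ∈ Icc 1 n, orwStep δ s.1 s.2 b * f (b, max s.2 b)
  map_add' f g := by
    ext s
    simp [mul_add, sum_add_distrib]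
  map_smul' c f := by
    ext s
    simp [mul_sum, mul_left_comm]

theorem killedStep_apply (f : ℕ × ℕ → ℝ) (s : ℕ × ℕ) :
    killedStep δ n f s = ∑ b ∈ Icc 1 n, orwStep δ s.1 s.2 b * f (b, max s.2 b) := rfl

theorem killedStep_nonneg (hδ : 0 ≤ δ) {f : ℕ × ℕ → ℝ} (hf : ∀ s ∈ liveStates n, 0 ≤ f s) :
    ∀ s ∈ liveStates n, 0 ≤ killedStep δ n f s := fun _ hs =>
  sum_nonneg fun _ hb =>
    mul_nonneg (orwStep_nonneg hδ _ _ _) (hf _ (mk_max_mem_liveStates hs.2.2 hb))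

theorem killedStep_pow_nonneg (hδ : 0 ≤ δ) (L : ℕ) {f : ℕ × ℕ → ℝ}
    (hf : ∀ s ∈ liveStates n, 0 ≤ f s) : ∀ s ∈ liveStates n, 0 ≤ (killedStep δ n ^ L) f s := by
  induction L with
  | zero => simpa using hf
  | succ L ih =>
    rw [pow_succ']
    exact killedStep_nonneg hδ ih

theorem killedStep_pow_mono (hδ : 0 ≤ δ) (L : ℕ) {f g : ℕ × ℕ → ℝ}
    (hfg : ∀ s ∈ liveStates n, f s ≤ g s) :
    ∀ s ∈ liveStates n, (killedStep δ n ^ L) f s ≤ (killedStep δ n ^ L) g s := fun s hs => by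
  have := killedStep_pow_nonneg hδ L (f := g - f) (fun t ht => sub_nonneg.2 (hfg t ht)) s hs
  rwa [map_sub, Pi.sub_apply, sub_nonneg] at this

theorem killedStep_eqOn {f g : ℕ × ℕ → ℝ} (hfg : Set.EqOn f g (liveStates n)) :
    Set.EqOn (killedStep δ n f) (killedStep δ n g) (liveStates n) := fun s hs => by
  simp only [killedStep_apply]
  exact sum_congr rfl fun b hb => by rw [hfg (mk_max_mem_liveStates hs.2.2 hb)]

theorem orwStep_add_killedStep_one_le_one (hδ : 0 ≤ δ) {s : ℕ × ℕ} (hs : s ∈ liveStates n) :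
    orwStep δ s.1 s.2 (n + 1) + killedStep δ n 1 s ≤ 1 := by
  have := sum_orwStep_le_one hδ (j := s.1) (m := s.2) (by have := hs.1; omega)
    (insert (n + 1) (Icc 1 n))
  simpa [killedStep_apply, sum_insert] using this

/-- The probability, from the state `s`, of reaching `n + 1` within `L` steps without
visiting `0`. -/
noncomputable def hitProb (δ : ℝ) (n : ℕ) : ℕ → ℕ × ℕ → ℝ
  | 0 => 0
  | L + 1 => fun s => orwStep δ s.1 s.2 (n + 1) + killedStep δ n (hitProb δ n L) s

theorem hitProb_nonneg (hδ : 0 ≤ δ) : ∀ L, ∀ s ∈ liveStates n, 0 ≤ hitProb δ n L s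
  | 0, _, _ => le_rfl
  | L + 1, s, hs =>
    add_nonneg (orwStep_nonneg hδ _ _ _) (killedStep_nonneg hδ (hitProb_nonneg hδ L) s hs)

theorem hitProb_add_killedStep_pow_one_le_one (hδ : 0 ≤ δ) :
    ∀ L, ∀ s ∈ liveStates n, hitProb δ n L s + (killedStep δ n ^ L) 1 s ≤ 1
  | 0, _, _ => by simp [hitProb]
  | L + 1, s, hs => by
    have hle := killedStep_pow_mono hδ 1 (f := hitProb δ n L + (killedStep δ n ^ L) 1) (g := 1)
      (hitProb_add_killedStep_pow_one_le_one hδ L) s hs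
    rw [pow_one, map_add] at hle
    rw [pow_succ', Module.End.mul_apply]
    have := orwStep_add_killedStep_one_le_one hδ hs
    simp only [hitProb, Pi.add_apply] at hle ⊢
    linarith

/-- Stepping up `n + 1 - s.1` times in a row. -/
theorem minUpProb_pow_le_hitProb (hδ : 0 ≤ δ) :
    ∀ L, ∀ s ∈ liveStates n, n + 1 ≤ s.1 + L → minUpProb δ ^ L ≤ hitProb δ n L s
  | 0, s, hs, hL => by have := hs.2.2; have := hs.2.1; omega
  | L + 1, s, hs, hL => by
    have hup : minUpProb δ ≤ orwStep δ s.1 s.2 (s.1 + 1) :=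
      minUpProb_le_orwStep_succ (by have := hs.1; omega)
    have hkill := killedStep_nonneg hδ (hitProb_nonneg hδ L) s hs
    simp only [hitProb]
    rcases (hs.2.1.trans hs.2.2).eq_or_lt with htop | hlt
    · calc minUpProb δ ^ (L + 1) ≤ minUpProb δ :=
            pow_le_of_le_one (minUpProb_pos hδ).le minUpProb_le_one L.succ_ne_zero
        _ ≤ orwStep δ s.1 s.2 (n + 1) := htop ▸ hup
        _ ≤ _ := le_add_of_nonneg_right hkill
    · have hnext : s.1 + 1 ∈ Icc 1 n := mem_Icc.2 ⟨by omega, hlt⟩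
      have hterm := single_le_sum
        (f := fun b => orwStep δ s.1 s.2 b * hitProb δ n L (b, max s.2 b))
        (fun b hb => mul_nonneg (orwStep_nonneg hδ _ _ _)
          (hitProb_nonneg hδ L _ (mk_max_mem_liveStates hs.2.2 hb))) hnext
      have hrec := minUpProb_pow_le_hitProb hδ L _ (mk_max_mem_liveStates hs.2.2 hnext)
        (by simp; omega)
      calc minUpProb δ ^ (L + 1) = minUpProb δ * minUpProb δ ^ L := pow_succ' _ L
        _ ≤ orwStep δ s.1 s.2 (s.1 + 1) * hitProb δ n L (s.1 + 1, max s.2 (s.1 + 1)) :=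
          mul_le_mul hup hrec (pow_nonneg (minUpProb_pos hδ).le L) (orwStep_nonneg hδ _ _ _)
        _ ≤ killedStep δ n (hitProb δ n L) s := hterm
        _ ≤ _ := le_add_of_nonneg_left (orwStep_nonneg hδ _ _ _)

theorem killedStep_pow_mul_one_le (hδ : 0 ≤ δ) (k : ℕ) :
    ∀ s ∈ liveStates n, (killedStep δ n ^ (k * n)) 1 s ≤ (1 - minUpProb δ ^ n) ^ k := by
  set ρ := 1 - minUpProb δ ^ n
  have hρ : 0 ≤ ρ := sub_nonneg.2 (pow_le_one₀ (minUpProb_pos hδ).le minUpProb_le_one)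
  have hblock : ∀ s ∈ liveStates n, (killedStep δ n ^ n) 1 s ≤ (ρ • 1 : ℕ × ℕ → ℝ) s :=
    fun s hs => by
      have := hitProb_add_killedStep_pow_one_le_one hδ n s hs
      have := minUpProb_pow_le_hitProb hδ n s hs (by have := hs.1; omega)
      simp only [Pi.smul_apply, Pi.one_apply, smul_eq_mul, mul_one, ρ]
      linarith
  induction k with
  | zero => simp
  | succ k ih =>
    intro s hs
    have hdecay := killedStep_pow_mono hδ (k * n) hblock s hs
    rw [map_smul, Pi.smul_apply, smul_eq_mul] at hdecay
    rw [add_mul, one_mul, pow_add, Module.End.mul_apply]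
    calc _ ≤ ρ * (killedStep δ n ^ (k * n)) 1 s := hdecay
      _ ≤ ρ * ρ ^ k := mul_le_mul_of_nonneg_left (ih s hs) hρ
      _ = ρ ^ (k + 1) := (pow_succ' ρ k).symm

/-- From `(j, m)` the walk first returns to its maximum `m` before `0` (gambler's ruin,
probability `j / m`), and then, from each level `i ∈ [m, n]`, climbs to `i + 1` before
returning to `0` with probability `i / (i + δ)`. -/
noncomputable def escapeProb (δ : ℝ) (n : ℕ) (s : ℕ × ℕ) : ℝ :=
  s.1 / s.2 * ∏ i ∈ Icc s.2 n, (i : ℝ) / (i + δ)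

theorem escapeProb_nonneg (hδ : 0 ≤ δ) (s : ℕ × ℕ) : 0 ≤ escapeProb δ n s := by
  unfold escapeProb
  positivity

theorem escapeProb_le_one (hδ : 0 ≤ δ) {s : ℕ × ℕ} (hs : s.1 ≤ s.2) : escapeProb δ n s ≤ 1 := by
  unfold escapeProb
  refine mul_le_one₀ (div_le_one_of_le₀ (by exact_mod_cast hs) (Nat.cast_nonneg _))
    (by positivity) (prod_le_one (fun i _ => by positivity) fun i _ => ?_)
  exact div_le_one_of_le₀ (le_add_of_nonneg_right hδ) (by positivity)

theorem escapeProb_zero_left (m : ℕ) : escapeProb δ n (0, m) = 0 := by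
  simp [escapeProb]

theorem escapeProb_top : escapeProb δ n (n + 1, n + 1) = 1 := by
  simp [escapeProb, Nat.cast_add_one_ne_zero]

theorem escapeProb_harmonic (hδ : 0 ≤ δ) {j m : ℕ} (hj : 1 ≤ j) (hjm : j ≤ m) (hm : m ≤ n) :
    orwStep δ j m (j + 1) * escapeProb δ n (j + 1, max m (j + 1))
      + orwStep δ j m (j - 1) * escapeProb δ n (j - 1, max m (j - 1)) = escapeProb δ n (j, m) := by
  have hj0 : j ≠ 0 := by omega
  have hne : j - 1 ≠ j + 1 := by omega
  have hpred : ((j - 1 : ℕ) : ℝ) = j - 1 := by push_cast [Nat.cast_sub hj]; ring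
  rw [max_eq_left (by omega : j - 1 ≤ m)]
  rcases hjm.lt_or_eq with hlt | rfl
  · have hup : orwStep δ j m (j + 1) = 1 / 2 := by simp [orwStep, hj0, hlt]
    have hdown : orwStep δ j m (j - 1) = 1 / 2 := by simp [orwStep, hj0, hlt, hne]
    rw [max_eq_left (by omega : j + 1 ≤ m), hup, hdown]
    simp only [escapeProb]
    push_cast [hpred]
    ring
  · have hup : orwStep δ j j (j + 1) = 1 / (1 + δ) := by simp [orwStep, hj0]
    have hdown : orwStep δ j j (j - 1) = δ / (1 + δ) := by simp [orwStep, hj0, hne]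
    have hprod : ∏ i ∈ Icc j n, (i : ℝ) / (i + δ)
        = j / (j + δ) * ∏ i ∈ Icc (j + 1) n, (i : ℝ) / (i + δ) := by
      rw [← mul_prod_Ioc_eq_prod_Icc hm, Icc_add_one_left_eq_Ioc]
    rw [max_eq_right (Nat.le_succ j), hup, hdown]
    simp only [escapeProb, hprod]
    push_cast [hpred]
    have : (j : ℝ) ≠ 0 := by positivity
    field_simp
    ring

theorem escapeProb_eq_orwStep_add_killedStep (hδ : 0 ≤ δ) {s : ℕ × ℕ}
    (hs : s ∈ liveStates n) :
    escapeProb δ n s = orwStep δ s.1 s.2 (n + 1) + killedStep δ n (escapeProb δ n) s := by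
  obtain ⟨j, m⟩ := s
  obtain ⟨hj, hjm, hm⟩ := hs
  have hsum := sum_orwStep_mul (δ := δ) (j := j) (m := m)
    (s := insert 0 (insert (n + 1) (Icc 1 n))) (by omega) (by simp; omega) (by simp; omega)
    fun b => escapeProb δ n (b, max m b)
  rw [escapeProb_harmonic hδ hj hjm hm, sum_insert (by simp), sum_insert (by simp),
    escapeProb_zero_left, max_eq_right (by omega : m ≤ n + 1), escapeProb_top] at hsum
  rw [killedStep_apply]
  simpa using hsum.symm

theorem eqOn_escapeProb_sub_hitProb (hδ : 0 ≤ δ) (L : ℕ) :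
    Set.EqOn (escapeProb δ n - hitProb δ n L) ((killedStep δ n ^ L) (escapeProb δ n))
      (liveStates n) := by
  induction L with
  | zero => intro s _; simp [hitProb]
  | succ L ih =>
    intro s hs
    rw [pow_succ', Module.End.mul_apply, ← killedStep_eqOn ih hs, map_sub]
    have := escapeProb_eq_orwStep_add_killedStep hδ hs
    simp only [Pi.sub_apply, hitProb]
    linarith

theorem iSup_ofReal_hitProb (hδ : 0 ≤ δ) {s : ℕ × ℕ} (hs : s ∈ liveStates n) :
    ⨆ L, ENNReal.ofReal (hitProb δ n L s) = ENNReal.ofReal (escapeProb δ n s) := by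
  set ρ := 1 - minUpProb δ ^ n
  have hρ₀ : 0 ≤ ρ := sub_nonneg.2 (pow_le_one₀ (minUpProb_pos hδ).le minUpProb_le_one)
  have hρ₁ : ρ < 1 := sub_lt_self 1 (pow_pos (minUpProb_pos hδ) n)
  have hgap (L : ℕ) : 0 ≤ escapeProb δ n s - hitProb δ n L s
      ∧ escapeProb δ n s - hitProb δ n L s ≤ (killedStep δ n ^ L) 1 s := by
    rw [← Pi.sub_apply, eqOn_escapeProb_sub_hitProb hδ L hs]
    exact ⟨killedStep_pow_nonneg hδ L (fun t _ => escapeProb_nonneg hδ t) s hs,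
      killedStep_pow_mono hδ L (fun t ht => escapeProb_le_one hδ ht.2.1) s hs⟩
  refine le_antisymm (iSup_le fun L => ENNReal.ofReal_le_ofReal (by linarith [hgap L])) ?_
  have hlim : Filter.Tendsto (fun k : ℕ => ENNReal.ofReal (escapeProb δ n s - ρ ^ k))
      Filter.atTop (nhds (ENNReal.ofReal (escapeProb δ n s))) :=
    ENNReal.tendsto_ofReal (by
      simpa using (tendsto_pow_atTop_nhds_zero_of_lt_one hρ₀ hρ₁).const_sub (escapeProb δ n s))
  refine le_of_tendsto' hlim fun k => le_iSup_of_le (k * n) (ENNReal.ofReal_le_ofReal ?_)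
  linarith [hgap (k * n), killedStep_pow_mul_one_le hδ k s hs]

noncomputable def hitProbWithBoundary (δ : ℝ) (n L : ℕ) (s : ℕ × ℕ) : ℝ :=
  if s.1 = n + 1 then 1 else if s.1 ∈ Icc 1 n then hitProb δ n L s else 0

theorem hitProbWithBoundary_nonneg (hδ : 0 ≤ δ) (L : ℕ) {m : ℕ} (hm : m ≤ n) (b : ℕ) :
    0 ≤ hitProbWithBoundary δ n L (b, max m b) := by
  unfold hitProbWithBoundary
  split_ifs with htop hlive
  exacts [zero_le_one, hitProb_nonneg hδ L _ (mk_max_mem_liveStates hm hlive), le_rfl]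

theorem hitProb_succ_eq_sum (L : ℕ) (s : ℕ × ℕ) :
    hitProb δ n (L + 1) s
      = ∑ b ∈ range (n + 2), orwStep δ s.1 s.2 b * hitProbWithBoundary δ n L (b, max s.2 b) := by
  have hrange : range (n + 2) = insert (n + 1) (insert 0 (Icc 1 n)) := by
    ext b
    simp only [mem_range, mem_insert, mem_Icc]
    omega
  have h0 : (0 : ℕ) ≠ n + 1 ∧ 0 ∉ Icc 1 n := by simp
  rw [hrange, sum_insert (by simp), sum_insert (by simp)]
  simp only [hitProb, killedStep_apply, hitProbWithBoundary, if_true, if_neg h0.1, if_neg h0.2,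
    mul_one, mul_zero, zero_add]
  refine congrArg _ (sum_congr rfl fun b hb => ?_)
  rw [if_neg (by simp at hb; omega), if_pos hb]

end ORW

theorem measure_eq_tsum_inter_preimage_singleton {Ω β : Type*} [MeasurableSpace Ω]
    [MeasurableSpace β] [Countable β] [MeasurableSingletonClass β] (μ : Measure Ω) {f : Ω → β}
    (hf : Measurable f) (t : Set Ω) : μ t = ∑' y, μ (t ∩ f ⁻¹' {y}) := by
  have := tsum_measure_preimage_singleton (μ := μ.restrict t) Set.countable_univ (f := f)
    fun y _ => hf (measurableSet_singleton y)
  rw [tsum_univ fun y => μ.restrict t (f ⁻¹' {y})] at this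
  simpa [Measure.restrict_apply (hf (measurableSet_singleton _)), Set.inter_comm] using this.symm

namespace ORW

variable {Ω : Type*} {X : ℕ → Ω → ℕ} {n K : ℕ} {s : ℕ × ℕ} {A : Set Ω}

def runningMax (X : ℕ → Ω → ℕ) (K : ℕ) (ω : Ω) : ℕ := (range (K + 1)).sup fun i => X i ω

theorem runningMax_succ (ω : Ω) :
    runningMax X (K + 1) ω = max (runningMax X K ω) (X (K + 1) ω) := by
  rw [runningMax, range_add_one, sup_insert, sup_comm]
  rfl

def IsCylinderEventAt (X : ℕ → Ω → ℕ) (K : ℕ) (s : ℕ × ℕ) (A : Set Ω) : Prop :=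
  (∀ ω ∈ A, ∀ ω', (∀ i ≤ K, X i ω' = X i ω) → ω' ∈ A)
    ∧ ∀ ω ∈ A, X K ω = s.1 ∧ runningMax X K ω = s.2

theorem isCylinderEventAt_start : IsCylinderEventAt X 0 (0, 0) {ω | X 0 ω = 0} :=
  ⟨fun _ hω _ h => (h 0 le_rfl).trans hω,
    fun _ hω => ⟨hω, by simpa [runningMax] using hω⟩⟩

theorem IsCylinderEventAt.inter_step (hA : IsCylinderEventAt X K s A) (b : ℕ) :
    IsCylinderEventAt X (K + 1) (b, max s.2 b) (A ∩ {ω | X (K + 1) ω = b}) := by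
  refine ⟨fun ω hω ω' hω' => ⟨hA.1 ω hω.1 ω' fun i hi => hω' i (by omega), ?_⟩,
    fun ω hω => ⟨hω.2, ?_⟩⟩
  · exact (hω' (K + 1) le_rfl).trans hω.2
  · rw [runningMax_succ, (hA.2 ω hω.1).2, hω.2]

def hitWithin (X : ℕ → Ω → ℕ) (n K L : ℕ) : Set Ω :=
  {ω | ∃ k ≤ L, X (K + k) ω = n + 1 ∧ ∀ i < k, X (K + i) ω ≠ 0}

theorem hitWithin_mono : Monotone (hitWithin X n K) :=
  fun _ _ hL _ ⟨k, hk, hit⟩ => ⟨k, hk.trans hL, hit⟩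

theorem setOf_eq_subset_hitWithin (L : ℕ) : {ω | X K ω = n + 1} ⊆ hitWithin X n K L :=
  fun _ h => ⟨0, Nat.zero_le L, h, fun _ hi => absurd hi (Nat.not_lt_zero _)⟩

theorem hitWithin_inter_setOf_eq_zero (L : ℕ) : hitWithin X n K L ∩ {ω | X K ω = 0} = ∅ := by
  refine Set.eq_empty_of_forall_notMem fun ω ⟨⟨k, _, hhit, hpos⟩, h0⟩ => ?_
  rcases k with _ | k
  · simp_all
  · exact hpos 0 k.succ_pos h0

theorem hitWithin_succ (L : ℕ) :
    hitWithin X n K (L + 1)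
      = {ω | X K ω = n + 1} ∪ ({ω | X K ω ≠ 0} ∩ hitWithin X n (K + 1) L) := by
  have hshift (i : ℕ) : K + (i + 1) = K + 1 + i := by omega
  ext ω
  constructor
  · rintro ⟨_ | k, hk, hhit, hpos⟩
    · exact Or.inl hhit
    · refine Or.inr ⟨hpos 0 k.succ_pos, k, by omega, hshift k ▸ hhit, fun i hi => ?_⟩
      exact hshift i ▸ hpos (i + 1) (by omega)
  · rintro (hhit | ⟨h0, k, hk, hhit, hpos⟩)
    · exact setOf_eq_subset_hitWithin (L + 1) hhit
    · refine ⟨k + 1, by omega, (hshift k).symm ▸ hhit, fun i hi => ?_⟩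
      rcases i with _ | i
      exacts [h0, (hshift i).symm ▸ hpos i (by omega)]

theorem IsCylinderEventAt.inter_hitWithin_succ (hA : IsCylinderEventAt X K s A)
    (hs : s ∈ liveStates n) (L : ℕ) :
    A ∩ hitWithin X n K (L + 1) = A ∩ hitWithin X n (K + 1) L := by
  rw [hitWithin_succ]
  ext ω
  constructor
  · rintro ⟨hωA, hhit | ⟨_, hhit⟩⟩
    · have := (hA.2 ω hωA).1
      have := hs.2.1.trans hs.2.2
      simp only [Set.mem_ofPred] at hhit
      omega
    · exact ⟨hωA, hhit⟩
  · rintro ⟨hωA, hhit⟩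
    have := (hA.2 ω hωA).1
    have := hs.1
    exact ⟨hωA, Or.inr ⟨by simp only [Set.mem_ofPred]; omega, hhit⟩⟩

theorem setOf_reach_before_return_inter_eq_iUnion (hA : ∀ ω ∈ A, X 0 ω = 0) :
    {ω | ∃ k : ℕ, X k ω = n + 1 ∧ ∀ j, 0 < j → j < k → X j ω ≠ 0} ∩ A
      = ⋃ L, A ∩ hitWithin X n 1 L := by
  ext ω
  simp only [Set.mem_inter_iff, Set.mem_iUnion, hitWithin, Set.mem_ofPred]
  constructor
  · rintro ⟨⟨_ | k, hhit, hpos⟩, hωA⟩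
    · rw [hA ω hωA] at hhit
      omega
    · exact ⟨k, hωA, k, le_rfl, by rwa [add_comm], fun i hi => hpos (1 + i) (by omega) (by omega)⟩
  · rintro ⟨L, hωA, k, -, hhit, hpos⟩
    refine ⟨⟨1 + k, hhit, fun j hj hjk => ?_⟩, hωA⟩
    obtain ⟨i, rfl⟩ := Nat.exists_eq_add_of_le hj
    exact hpos i (by omega)

theorem setOf_forall_le_succ (a : ℕ → ℕ) :
    {ω | ∀ i ≤ K + 1, X i ω = a i} = {ω | ∀ i ≤ K, X i ω = a i} ∩ {ω | X (K + 1) ω = a (K + 1)} := by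
  ext ω
  refine ⟨fun h => ⟨fun i hi => h i (by omega), h _ le_rfl⟩, fun h i hi => ?_⟩
  rcases Nat.le_succ_iff.1 hi with hi | rfl
  exacts [h.1 i hi, h.2]

variable [MeasurableSpace Ω] {P : Measure Ω} {δ : ℝ}

def HasTransitions (P : Measure Ω) (δ : ℝ) (X : ℕ → Ω → ℕ) : Prop :=
  ∀ (k : ℕ) (a : ℕ → ℕ),
    P {ω | ∀ j ≤ k + 1, X j ω = a j}
      = P {ω | ∀ j ≤ k, X j ω = a j}
          * ENNReal.ofReal (orwStep δ (a k) ((range (k + 1)).sup a) (a (k + 1)))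

/-- The Markov property of (position, running maximum): split `A` into the cylinders of the
path up to time `K` and apply the transition law on each. -/
theorem IsCylinderEventAt.measure_inter_step (hX : HasTransitions P δ X)
    (hXm : ∀ k, Measurable (X k)) (hA : IsCylinderEventAt X K s A) (b : ℕ) :
    P (A ∩ {ω | X (K + 1) ω = b}) = P A * ENNReal.ofReal (orwStep δ s.1 s.2 b) := by
  let path : Ω → Fin (K + 1) → ℕ := fun ω i => X i ω
  have hpath : Measurable path := measurable_pi_lambda _ fun i => hXm i
  rw [measure_eq_tsum_inter_preimage_singleton P hpath,
    measure_eq_tsum_inter_preimage_singleton P hpath A, ← ENNReal.tsum_mul_right]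
  refine tsum_congr fun y => ?_
  by_cases hy : (A ∩ path ⁻¹' {y}).Nonempty
  · obtain ⟨ω₀, hω₀A, rfl⟩ := hy
    let a : ℕ → ℕ := fun i => if i ≤ K then X i ω₀ else b
    have ha : ∀ i ≤ K, a i = X i ω₀ := fun i hi => if_pos hi
    have hb : a (K + 1) = b := if_neg (by omega)
    have hcyl : A ∩ path ⁻¹' {path ω₀} = {ω | ∀ i ≤ K, X i ω = a i} := by
      have hfiber : path ⁻¹' {path ω₀} = {ω | ∀ i ≤ K, X i ω = a i} := by
        ext ω
        simp only [Set.mem_preimage, Set.mem_singleton_iff, funext_iff, Fin.forall_iff,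
          Nat.lt_succ_iff, Set.mem_ofPred, path]
        exact forall₂_congr fun i hi => by rw [ha i hi]
      have hsub : path ⁻¹' {path ω₀} ⊆ A := fun ω hω =>
        hA.1 ω₀ hω₀A ω fun i hi => congrFun (hω : path ω = path ω₀) ⟨i, by omega⟩
      rw [Set.inter_eq_right.2 hsub, hfiber]
    have hsup : (range (K + 1)).sup a = runningMax X K ω₀ :=
      sup_congr rfl fun i hi => ha i (Nat.lt_succ_iff.1 (mem_range.1 hi))
    rw [Set.inter_right_comm, hcyl, ← hb, ← setOf_forall_le_succ, hX K a, hsup, ha K le_rfl,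
      (hA.2 ω₀ hω₀A).1, (hA.2 ω₀ hω₀A).2]
  · rw [Set.not_nonempty_iff_eq_empty] at hy
    have : A ∩ {ω | X (K + 1) ω = b} ∩ path ⁻¹' {y} = ∅ :=
      Set.subset_eq_empty (Set.inter_subset_inter_left _ Set.inter_subset_left) hy
    rw [hy, this, measure_empty, zero_mul]

theorem IsCylinderEventAt.measure_inter_hitWithin_inter_step (hδ : 0 ≤ δ)
    (hX : HasTransitions P δ X) (hXm : ∀ k, Measurable (X k)) {L : ℕ}
    (hL : ∀ {K s A}, IsCylinderEventAt X K s A → s ∈ liveStates n →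
      P (A ∩ hitWithin X n K L) = P A * ENNReal.ofReal (hitProb δ n L s))
    (hA : IsCylinderEventAt X K s A) (hs : s ∈ liveStates n) (b : ℕ) :
    P (A ∩ hitWithin X n (K + 1) L ∩ X (K + 1) ⁻¹' {b})
      = P A * ENNReal.ofReal (orwStep δ s.1 s.2 b * hitProbWithBoundary δ n L (b, max s.2 b)) := by
  have hB := hA.measure_inter_step hX hXm b
  change P (A ∩ hitWithin X n (K + 1) L ∩ {ω | X (K + 1) ω = b}) = _
  rw [Set.inter_right_comm]
  by_cases htop : b = n + 1
  · rw [Set.inter_eq_left.2 (Set.inter_subset_right.trans (htop ▸ setOf_eq_subset_hitWithin L)),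
      hB]
    simp [hitProbWithBoundary, htop]
  by_cases hlive : b ∈ Icc 1 n
  · rw [hL (hA.inter_step b) (mk_max_mem_liveStates hs.2.2 hlive), hB, mul_assoc,
      ← ENNReal.ofReal_mul (orwStep_nonneg hδ _ _ _)]
    simp only [hitProbWithBoundary, if_neg htop, if_pos hlive]
  rcases b with _ | b
  · rw [Set.inter_assoc, Set.inter_comm {ω | X (K + 1) ω = 0}, hitWithin_inter_setOf_eq_zero,
      Set.inter_empty]
    simp [hitProbWithBoundary]
  · have hbig : n < b + 1 := by simp only [mem_Icc, not_and, not_le] at hlive; omega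
    have hstep : orwStep δ s.1 s.2 (b + 1) = 0 :=
      orwStep_eq_zero (by have := hs.1; omega) (by have := hs.2.1; have := hs.2.2; omega)
        (by have := hs.2.1; have := hs.2.2; omega)
    rw [measure_mono_null Set.inter_subset_left (by rw [hB, hstep, ENNReal.ofReal_zero, mul_zero])]
    simp [hstep]

theorem IsCylinderEventAt.measure_inter_hitWithin (hδ : 0 ≤ δ) (hX : HasTransitions P δ X)
    (hXm : ∀ k, Measurable (X k)) (L : ℕ) :
    ∀ {K s A}, IsCylinderEventAt X K s A → s ∈ liveStates n →
      P (A ∩ hitWithin X n K L) = P A * ENNReal.ofReal (hitProb δ n L s) := by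
  induction L with
  | zero =>
    intro K s A hA hs
    have hempty : A ∩ hitWithin X n K 0 = ∅ := by
      refine Set.eq_empty_of_forall_notMem fun ω ⟨hωA, k, hk, hhit, _⟩ => ?_
      have := hs.2.1.trans hs.2.2
      rw [Nat.le_zero.1 hk, add_zero, (hA.2 ω hωA).1] at hhit
      omega
    simp [hempty, hitProb]
  | succ L ih =>
    intro K s A hA hs
    have hout (b : ℕ) (hb : b ∉ range (n + 2)) :
        ENNReal.ofReal (orwStep δ s.1 s.2 b * hitProbWithBoundary δ n L (b, max s.2 b)) = 0 := by
      have : b ≠ n + 1 ∧ b ∉ Icc 1 n := by simp at hb ⊢; omega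
      simp [hitProbWithBoundary, this.1, this.2]
    rw [hA.inter_hitWithin_succ hs, measure_eq_tsum_inter_preimage_singleton P (hXm (K + 1)),
      tsum_congr (hA.measure_inter_hitWithin_inter_step hδ hX hXm ih hs),
      ENNReal.tsum_mul_left, tsum_eq_sum hout, ← ENNReal.ofReal_sum_of_nonneg fun b _ =>
        mul_nonneg (orwStep_nonneg hδ _ _ _) (hitProbWithBoundary_nonneg hδ L hs.2.2 b),
      ← hitProb_succ_eq_sum]

end ORW

/-- **Lemma 1.** For the once-reinforced random walk with parameter `δ > 0` on the
nonnegative integers started at `0`, the probability that after the first jump it reaches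
`n + 1` before returning to `0` equals `∏_{j=1}^n j/(j + δ)`. -/
theorem once_reinforced_walk_escape_probability
    {Ω : Type*} [MeasurableSpace Ω] (P : Measure Ω) [IsProbabilityMeasure P]
    (δ : ℝ) (hδ : 0 < δ) (X : ℕ → Ω → ℕ) (hXmeas : ∀ k, Measurable (X k))
    (hstart : P {ω | X 0 ω = 0} = 1)
    (hstep : ∀ (k : ℕ) (a : ℕ → ℕ),
      P {ω | ∀ j ≤ k + 1, X j ω = a j}
        = P {ω | ∀ j ≤ k, X j ω = a j}
            * ENNReal.ofReal (orwStep δ (a k) ((Finset.range (k + 1)).sup a) (a (k + 1))))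
    (n : ℕ) (hn : 1 ≤ n) :
    P {ω | ∃ k : ℕ, X k ω = n + 1 ∧ ∀ j, 0 < j → j < k → X j ω ≠ 0}
      = ENNReal.ofReal (∏ j ∈ Finset.Icc 1 n, (j : ℝ) / ((j : ℝ) + δ)) := by
  set A₁ := {ω | X 0 ω = 0} ∩ {ω | X 1 ω = 1}
  have hA₁ : ORW.IsCylinderEventAt X 1 (1, 1) A₁ := ORW.isCylinderEventAt_start.inter_step 1
  have hPA₁ : P A₁ = 1 := by
    rw [ORW.isCylinderEventAt_start.measure_inter_step hstep hXmeas, hstart]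
    simp [orwStep]
  have hnull : P A₁ᶜ = 0 :=
    (prob_compl_eq_zero_iff ((hXmeas 0 (measurableSet_singleton 0)).inter
      (hXmeas 1 (measurableSet_singleton 1)))).2 hPA₁
  have hlive : ((1, 1) : ℕ × ℕ) ∈ ORW.liveStates n := ⟨le_rfl, le_rfl, hn⟩
  rw [← measure_inter_conull hnull, ORW.setOf_reach_before_return_inter_eq_iUnion fun ω hω => hω.1,
    (monotone_const.inter ORW.hitWithin_mono).measure_iUnion]
  simp_rw [hA₁.measure_inter_hitWithin hδ.le hstep hXmeas _ hlive, hPA₁, one_mul]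
  rw [ORW.iSup_ofReal_hitProb hδ.le hlive]
  simp [ORW.escapeProb]
end

section
/- Let h be a nonnegative random variable whose law is the exponential distribution with rate 1, let 𝒢 be a sub-σ-algebra independent of h, let Y be a 𝒢-measurable random variable, and let A ∈ 𝒢 with P(A ∩ {h < Y}) > 0. Then for every x ≥ 0, P({h ≥ x} ∩ A ∩ {h < Y}) ≤ e^{-x} · P(A ∩ {h < Y}); that is, conditionally on A ∩ {h < Y}, the random variable h is stochastically dominated by an exponential with rate 1. -/
/-!
By independence and Fubini, for every Borel set `B`,
`P({h ∈ B} ∩ A ∩ {h < Y}) = ∫_A ν(B ∩ (-∞, Y)) dP` with `ν = Exp(1)` the law of `h`.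
For `B = [x, ∞)` and `B = ℝ` the integrands compare pointwise by memorylessness:
`ν[x, y) = e^{-x} - e^{-y} ≤ e^{-x} (1 - e^{-y}) = e^{-x} ν(-∞, y)`.
-/

open MeasureTheory ProbabilityTheory Set Real

namespace ProbabilityTheory

instance nullSingletonClass_expMeasure (r : ℝ) : NullSingletonClass (expMeasure r) :=
  inferInstanceAs (NullSingletonClass (volume.withDensity _))

section ExpMeasure

variable {r : ℝ}

lemma expMeasure_Iio (hr : 0 < r) (y : ℝ) :
    expMeasure r (Iio y) = ENNReal.ofReal (1 - exp (-(r * y))) := by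
  have := isProbabilityMeasure_expMeasure hr
  rw [measure_congr Iio_ae_eq_Iic, ← ofReal_cdf, cdf_expMeasure_eq hr]
  split_ifs with hy
  · rfl
  · rw [ENNReal.ofReal_zero, eq_comm, ENNReal.ofReal_eq_zero, sub_nonpos, one_le_exp_iff]
    nlinarith

lemma expMeasure_Ico (hr : 0 < r) {x : ℝ} (hx : 0 ≤ x) (y : ℝ) :
    expMeasure r (Ico x y) = ENNReal.ofReal (exp (-(r * x)) - exp (-(r * y))) := by
  rcases le_or_gt y x with hyx | hxy
  · rw [Ico_eq_empty hyx.not_gt, measure_empty, eq_comm, ENNReal.ofReal_eq_zero, sub_nonpos,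
      exp_le_exp]
    nlinarith
  · have := isProbabilityMeasure_expMeasure hr
    rw [show Ico x y = Iio y \ Iio x by ext; simp,
      measure_sdiff (Iio_subset_Iio hxy.le) measurableSet_Iio.nullMeasurableSet
        (measure_ne_top _ _),
      expMeasure_Iio hr, expMeasure_Iio hr,
      ← ENNReal.ofReal_sub _ (sub_nonneg.2 (exp_le_one_iff.2 (by nlinarith)))]
    ring_nf

lemma expMeasure_Ico_le (hr : 0 < r) {x : ℝ} (hx : 0 ≤ x) (y : ℝ) :
    expMeasure r (Ico x y) ≤ ENNReal.ofReal (exp (-(r * x))) * expMeasure r (Iio y) := by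
  rw [expMeasure_Ico hr hx, expMeasure_Iio hr, ← ENNReal.ofReal_mul (exp_nonneg _)]
  refine ENNReal.ofReal_le_ofReal ?_
  have : exp (-(r * x)) ≤ 1 := exp_le_one_iff.2 (by nlinarith)
  nlinarith [exp_pos (-(r * y))]

end ExpMeasure

variable {Ω : Type*}

theorem IndepFun.measure_preimage_eq_lintegral [MeasurableSpace Ω] {P : Measure Ω}
    [IsFiniteMeasure P] {β α : Type*} [MeasurableSpace β] [MeasurableSpace α] {W : Ω → β}
    {X : Ω → α} (hWX : IndepFun W X P) (hW : Measurable W) (hX : Measurable X)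
    {s : Set (β × α)} (hs : MeasurableSet s) :
    P ((fun ω ↦ (W ω, X ω)) ⁻¹' s) = ∫⁻ ω, P.map X (Prod.mk (W ω) ⁻¹' s) ∂P := by
  rw [← Measure.map_apply (hW.prodMk hX) hs,
    (indepFun_iff_map_prod_eq_prod_map_map hW.aemeasurable hX.aemeasurable).1 hWX,
    Measure.prod_apply hs, lintegral_map (measurable_measure_prodMk_left hs) hW]

theorem measure_mem_inter_inter_lt_eq_setLIntegral {𝒢 mΩ : MeasurableSpace Ω}
    {P : Measure Ω} [IsFiniteMeasure P] {h Y : Ω → ℝ} (h𝒢 : 𝒢 ≤ mΩ)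
    (hindep : Indep (MeasurableSpace.comap h inferInstance) 𝒢 P) (hh : Measurable h)
    (hY : Measurable[𝒢] Y) {A : Set Ω} (hA : MeasurableSet[𝒢] A) {B : Set ℝ}
    (hB : MeasurableSet B) :
    P ({ω | h ω ∈ B} ∩ A ∩ {ω | h ω < Y ω}) = ∫⁻ ω in A, P.map h (B ∩ Iio (Y ω)) ∂P := by
  -- `A` enters through its indicator, so that `Y` and `A` form a single `𝒢`-measurable variable
  set W : Ω → ℝ × ℝ := fun ω ↦ (Y ω, A.indicator 1 ω)
  have hW𝒢 : Measurable[𝒢] W := hY.prodMk (measurable_const.indicator hA)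
  have hWh : IndepFun W h P := (indep_of_indep_of_le_right hindep hW𝒢.comap_le).symm
  set s : Set ((ℝ × ℝ) × ℝ) := {p | p.2 ∈ B ∧ p.1.2 = 1 ∧ p.2 < p.1.1}
  have hs : MeasurableSet s :=
    (measurable_snd hB).inter <| (measurable_fst.snd (measurableSet_singleton 1)).inter <|
      measurableSet_lt measurable_snd measurable_fst.fst
  have hpre : (fun ω ↦ (W ω, h ω)) ⁻¹' s = {ω | h ω ∈ B} ∩ A ∩ {ω | h ω < Y ω} := by
    ext ω
    by_cases hω : ω ∈ A <;> simp [W, s, hω]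
  have hslice (ω : Ω) :
      P.map h (Prod.mk (W ω) ⁻¹' s) = A.indicator (fun ω ↦ P.map h (B ∩ Iio (Y ω))) ω := by
    by_cases hω : ω ∈ A
    · simp [W, s, hω, inter_def]
    · simp [W, s, hω]
  rw [← hpre, hWh.measure_preimage_eq_lintegral (hW𝒢.mono h𝒢 le_rfl) hh hs]
  simp_rw [hslice]
  exact lintegral_indicator (h𝒢 _ hA) _

end ProbabilityTheory

theorem conditioned_exponential_stochastically_dominated_general
    {Ω : Type*} [m : MeasurableSpace Ω] (P : Measure Ω) [IsProbabilityMeasure P]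
    (h : Ω → ℝ) (hmeas : Measurable h)
    (hlaw : P.map h = ProbabilityTheory.expMeasure 1)
    (𝒢 : MeasurableSpace Ω) (h𝒢 : 𝒢 ≤ m)
    (hindep : ProbabilityTheory.Indep (MeasurableSpace.comap h inferInstance) 𝒢 P)
    (Y : Ω → ℝ) (hY : Measurable[𝒢] Y)
    (A : Set Ω) (hA : MeasurableSet[𝒢] A) :
    ∀ x : ℝ, 0 ≤ x →
      P ({ω | x ≤ h ω} ∩ A ∩ {ω | h ω < Y ω})
        ≤ ENNReal.ofReal (Real.exp (-x)) * P (A ∩ {ω | h ω < Y ω}) := by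
  intro x hx
  have hfubini := fun B (hB : MeasurableSet B) ↦
    measure_mem_inter_inter_lt_eq_setLIntegral h𝒢 hindep hmeas hY hA hB
  calc P ({ω | x ≤ h ω} ∩ A ∩ {ω | h ω < Y ω})
      = ∫⁻ ω in A, expMeasure 1 (Ici x ∩ Iio (Y ω)) ∂P := by
        simpa [hlaw] using hfubini (Ici x) measurableSet_Ici
    _ ≤ ∫⁻ ω in A, ENNReal.ofReal (exp (-x)) * expMeasure 1 (Iio (Y ω)) ∂P :=
        lintegral_mono fun ω ↦ by simpa [Ici_inter_Iio] using expMeasure_Ico_le one_pos hx (Y ω)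
    _ = ENNReal.ofReal (exp (-x)) * ∫⁻ ω in A, expMeasure 1 (univ ∩ Iio (Y ω)) ∂P := by
        simp only [lintegral_const_mul' _ _ ENNReal.ofReal_ne_top, univ_inter]
    _ = ENNReal.ofReal (exp (-x)) * P (A ∩ {ω | h ω < Y ω}) := by
        rw [← hlaw, ← hfubini univ MeasurableSet.univ]
        simp

/-- **Conditioned exponential clocks are stochastically dominated.** Let `h` be a nonnegative
random variable with exponential law of rate `1`, let `𝒢` be a sub-σ-algebra independent of
`h`, let `Y` be `𝒢`-measurable, and let `A ∈ 𝒢` with `P(A ∩ {h < Y}) > 0`. Then for every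
`x ≥ 0`, `P({h ≥ x} ∩ A ∩ {h < Y}) ≤ e^{-x} P(A ∩ {h < Y})`; that is, conditionally on
`A ∩ {h < Y}`, the variable `h` is stochastically dominated by an exponential of rate `1`. -/
theorem conditioned_exponential_stochastically_dominated
    {Ω : Type*} [m : MeasurableSpace Ω] (P : Measure Ω) [IsProbabilityMeasure P]
    (h : Ω → ℝ) (hmeas : Measurable h) (hnonneg : ∀ ω, 0 ≤ h ω)
    (hlaw : P.map h = ProbabilityTheory.expMeasure 1)
    (𝒢 : MeasurableSpace Ω) (h𝒢 : 𝒢 ≤ m)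
    (hindep : ProbabilityTheory.Indep (MeasurableSpace.comap h inferInstance) 𝒢 P)
    (Y : Ω → ℝ) (hY : Measurable[𝒢] Y)
    (A : Set Ω) (hA : MeasurableSet[𝒢] A)
    (hpos : 0 < P (A ∩ {ω | h ω < Y ω})) :
    ∀ x : ℝ, 0 ≤ x →
      P ({ω | x ≤ h ω} ∩ A ∩ {ω | h ω < Y ω})
        ≤ ENNReal.ofReal (Real.exp (-x)) * P (A ∩ {ω | h ω < Y ω}) :=
  conditioned_exponential_stochastically_dominated_general (m := m) P h hmeas hlaw 𝒢 h𝒢 hindep Y hY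
    A hA
end
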